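/- Let F be a finite set of points in R^d, listed in lexicographically increasing order as p_1, ..., p_n, and let y_k denote the componentwise minimum of p_1, ..., p_k. If for some index k+1 there exists a dimension j with p_{k+1}[j] < y_k[j], then p_{k+1} belongs to the Pareto frontier of F. -/

import Mathlib

/-- `p` dominates `q` if `p ≠ q` and `p i ≤ q i` in every coordinate. -/
def dominates {d : ℕ} (p q : Fin d → ℝ) : Prop :=
  p ≠ q ∧ ∀ i, p i ≤ q i

/-- Pareto frontier of a set `F`: points of `F` not dominated by any point of `F`. -/
def paretoFrontier {d : ℕ} (F : Set (Fin d → ℝ)) : Set (Fin d → ℝ) :=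
  {p ∈ F | ¬ ∃ q ∈ F, dominates q p}

/-- Lexicographic strict order on `ℝ^d`. -/
def lexLt {d : ℕ} (p q : Fin d → ℝ) : Prop :=
  ∃ i : Fin d, (∀ j, j < i → p j = q j) ∧ p i < q i

/-- Minkowski sum of two sets of points. -/
def minkSum {d : ℕ} (A B : Set (Fin d → ℝ)) : Set (Fin d → ℝ) :=
  {x | ∃ a ∈ A, ∃ b ∈ B, x = a + b}

theorem not_dominates_self {d : ℕ} (p : Fin d → ℝ) : ¬ dominates p p :=
  fun hdom => hdom.1 rfl

theorem not_dominates_of_lt {d : ℕ} {p q : Fin d → ℝ} {j : Fin d} (h : p j < q j) :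
    ¬ dominates q p :=
  fun hdom => (hdom.2 j).not_gt h

theorem not_dominates_of_lexLt {d : ℕ} {p q : Fin d → ℝ} (h : lexLt p q) : ¬ dominates q p :=
  let ⟨_, _, hi⟩ := h
  not_dominates_of_lt hi

/-- Correctness of the ParetoSubset selection: if, in a lexicographically sorted
list of points, point `p k` has some coordinate strictly below the componentwise
minimum of all earlier points, then `p k` is in the Pareto frontier. -/
theorem paretoSubset_selected_in_frontier {d n : ℕ} (p : Fin n → Fin d → ℝ)
    (hsort : ∀ i j : Fin n, i < j → lexLt (p i) (p j))
    (k : Fin n)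
    (h : ∃ j : Fin d, ∀ l : Fin n, l < k → p k j < p l j) :
    p k ∈ paretoFrontier (Set.range p) := by
  obtain ⟨j, hj⟩ := h
  refine ⟨⟨k, rfl⟩, ?_⟩
  rintro ⟨_, ⟨l, rfl⟩, hdom⟩
  rcases lt_trichotomy l k with hlt | rfl | hgt
  · exact not_dominates_of_lt (hj l hlt) hdom
  · exact not_dominates_self (p l) hdom
  · exact not_dominates_of_lexLt (hsort k l hgt) hdom
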